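/- In a compact topological category C, each of the Green preorders ≤_R, ≤_L, ≤_J on morphisms is a closed subset of Mor(C) × Mor(C), and consequently each J-class (R-class, L-class) of morphisms is a closed set. -/
import Mathlib


open CategoryTheory

/-- The space of all morphisms of a small category, as a sigma type. -/
abbrev Mor (C : Type*) [Category C] := Σ (X Y : C), X ⟶ Y

/-- The Green preorder `≤_R` on morphisms: `m ≤_R n` iff `m = n ∘ β`. -/
def RLe {C : Type*} [Category C] (m n : Mor C) : Prop :=
  ∃ (W : C) (β : W ⟶ n.1), m = ⟨W, n.2.1, β ≫ n.2.2⟩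

/-- The Green preorder `≤_L` on morphisms: `m ≤_L n` iff `m = α ∘ n`. -/
def LLe {C : Type*} [Category C] (m n : Mor C) : Prop :=
  ∃ (Z : C) (α : n.2.1 ⟶ Z), m = ⟨n.1, Z, n.2.2 ≫ α⟩

/-- The Green preorder `≤_J` on morphisms: `m ≤_J n` iff `m = α ∘ n ∘ β`. -/
def JLe {C : Type*} [Category C] (m n : Mor C) : Prop :=
  ∃ (W Z : C) (β : W ⟶ n.1) (α : n.2.1 ⟶ Z), m = ⟨W, Z, β ≫ n.2.2 ≫ α⟩

/-- Composition of two composable morphisms, with an `eqToHom` glue. -/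
def compMor {C : Type*} [Category C] (a b : Mor C) (h : a.2.1 = b.1) : Mor C :=
  ⟨a.1, b.2.1, a.2.2 ≫ eqToHom h ≫ b.2.2⟩

lemma continuous_compMor {C : Type*} [Category C] [TopologicalSpace (Mor C)]
    (hcomp : Continuous fun p : {p : Mor C × Mor C // p.1.2.1 = p.2.1} =>
      (⟨p.1.1.1, p.1.2.2.1, p.1.1.2.2 ≫ eqToHom p.2 ≫ p.1.2.2.2⟩ : Mor C))
    {X : Type*} [TopologicalSpace X] {f g : X → Mor C}
    (hf : Continuous f) (hg : Continuous g) (h : ∀ x, (f x).2.1 = (g x).1) :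
    Continuous fun x => compMor (f x) (g x) (h x) := by
  have : Continuous fun x =>
      (⟨(f x, g x), h x⟩ : {p : Mor C × Mor C // p.1.2.1 = p.2.1}) :=
    (hf.prodMk hg).subtype_mk _
  exact hcomp.comp this

/-- In a compact topological category, the Green preorders `≤_R`, `≤_L`, `≤_J`
are closed subsets of `Mor C × Mor C`, and consequently every `R`-class,
`L`-class and `J`-class of morphisms is closed. -/
theorem stmt_13 {C : Type*} [Category C]
    [TopologicalSpace C] [CompactSpace C] [T2Space C]
    [TopologicalSpace (Mor C)] [CompactSpace (Mor C)] [T2Space (Mor C)]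
    (hdom : Continuous fun m : Mor C => m.1)
    (hcod : Continuous fun m : Mor C => m.2.1)
    (hid : Continuous fun X : C => (⟨X, X, 𝟙 X⟩ : Mor C))
    (hcomp : Continuous fun p : {p : Mor C × Mor C // p.1.2.1 = p.2.1} =>
      (⟨p.1.1.1, p.1.2.2.1, p.1.1.2.2 ≫ eqToHom p.2 ≫ p.1.2.2.2⟩ : Mor C)) :
    (IsClosed {p : Mor C × Mor C | RLe p.1 p.2} ∧
     IsClosed {p : Mor C × Mor C | LLe p.1 p.2} ∧
     IsClosed {p : Mor C × Mor C | JLe p.1 p.2}) ∧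
    ∀ m : Mor C,
      IsClosed {n : Mor C | RLe n m ∧ RLe m n} ∧
      IsClosed {n : Mor C | LLe n m ∧ LLe m n} ∧
      IsClosed {n : Mor C | JLe n m ∧ JLe m n} := by
  -- the composable pairs form a closed, hence compact, subspace
  have hKcl : IsClosed {p : Mor C × Mor C | p.1.2.1 = p.2.1} :=
    isClosed_eq (hcod.comp continuous_fst) (hdom.comp continuous_snd)
  haveI : CompactSpace {p : Mor C × Mor C // p.1.2.1 = p.2.1} :=
    isCompact_iff_compactSpace.mp hKcl.isCompact
  -- composable triples
  have hK3cl : IsClosed {t : Mor C × Mor C × Mor C |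
      t.1.2.1 = t.2.1.1 ∧ t.2.1.2.1 = t.2.2.1} := by
    refine IsClosed.inter ?_ ?_
    · exact isClosed_eq (hcod.comp continuous_fst)
        (hdom.comp (continuous_fst.comp continuous_snd))
    · exact isClosed_eq (hcod.comp (continuous_fst.comp continuous_snd))
        (hdom.comp (continuous_snd.comp continuous_snd))
  haveI : CompactSpace {t : Mor C × Mor C × Mor C //
      t.1.2.1 = t.2.1.1 ∧ t.2.1.2.1 = t.2.2.1} :=
    isCompact_iff_compactSpace.mp hK3cl.isCompact
  -- R: the graph of ≤_R is the range of a continuous map from a compact space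
  have hR : IsClosed {p : Mor C × Mor C | RLe p.1 p.2} := by
    have hF : Continuous fun q : {p : Mor C × Mor C // p.1.2.1 = p.2.1} =>
        ((compMor q.1.1 q.1.2 q.2, q.1.2) : Mor C × Mor C) := by
      refine Continuous.prodMk ?_ ?_
      · exact continuous_compMor hcomp
          (continuous_fst.comp continuous_subtype_val)
          (continuous_snd.comp continuous_subtype_val) (fun q => q.2)
      · exact continuous_snd.comp continuous_subtype_val
    have heq : {p : Mor C × Mor C | RLe p.1 p.2} = Set.range
        (fun q : {p : Mor C × Mor C // p.1.2.1 = p.2.1} =>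
          ((compMor q.1.1 q.1.2 q.2, q.1.2) : Mor C × Mor C)) := by
      ext ⟨m, n⟩
      simp only [Set.mem_setOf_eq, Set.mem_range]
      constructor
      · rintro ⟨W, β, rfl⟩
        exact ⟨⟨(⟨W, n.1, β⟩, n), rfl⟩, by simp [compMor]⟩
      · rintro ⟨⟨⟨a, b⟩, hab⟩, hq⟩
        simp only [Prod.mk.injEq] at hq
        obtain ⟨rfl, rfl⟩ := hq
        exact ⟨a.1, a.2.2 ≫ eqToHom hab, by simp [compMor]⟩
    rw [heq]
    exact (isCompact_range hF).isClosed
  -- L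
  have hL : IsClosed {p : Mor C × Mor C | LLe p.1 p.2} := by
    have hF : Continuous fun q : {p : Mor C × Mor C // p.1.2.1 = p.2.1} =>
        ((compMor q.1.1 q.1.2 q.2, q.1.1) : Mor C × Mor C) := by
      refine Continuous.prodMk ?_ ?_
      · exact continuous_compMor hcomp
          (continuous_fst.comp continuous_subtype_val)
          (continuous_snd.comp continuous_subtype_val) (fun q => q.2)
      · exact continuous_fst.comp continuous_subtype_val
    have heq : {p : Mor C × Mor C | LLe p.1 p.2} = Set.range
        (fun q : {p : Mor C × Mor C // p.1.2.1 = p.2.1} =>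
          ((compMor q.1.1 q.1.2 q.2, q.1.1) : Mor C × Mor C)) := by
      ext ⟨m, n⟩
      simp only [Set.mem_setOf_eq, Set.mem_range]
      constructor
      · rintro ⟨Z, α, rfl⟩
        exact ⟨⟨(n, ⟨n.2.1, Z, α⟩), rfl⟩, by simp [compMor]⟩
      · rintro ⟨⟨⟨a, b⟩, hab⟩, hq⟩
        simp only [Prod.mk.injEq] at hq
        obtain ⟨rfl, rfl⟩ := hq
        exact ⟨b.2.1, eqToHom hab ≫ b.2.2, by simp [compMor]⟩
    rw [heq]
    exact (isCompact_range hF).isClosed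
  -- J
  have hJ : IsClosed {p : Mor C × Mor C | JLe p.1 p.2} := by
    have hF : Continuous fun t : {t : Mor C × Mor C × Mor C //
        t.1.2.1 = t.2.1.1 ∧ t.2.1.2.1 = t.2.2.1} =>
        ((compMor t.1.1 (compMor t.1.2.1 t.1.2.2 t.2.2) t.2.1, t.1.2.1)
          : Mor C × Mor C) := by
      have h1 : Continuous fun t : {t : Mor C × Mor C × Mor C //
          t.1.2.1 = t.2.1.1 ∧ t.2.1.2.1 = t.2.2.1} => t.1.1 :=
        continuous_fst.comp continuous_subtype_val
      have h2 : Continuous fun t : {t : Mor C × Mor C × Mor C //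
          t.1.2.1 = t.2.1.1 ∧ t.2.1.2.1 = t.2.2.1} => t.1.2.1 :=
        continuous_fst.comp (continuous_snd.comp continuous_subtype_val)
      have h3 : Continuous fun t : {t : Mor C × Mor C × Mor C //
          t.1.2.1 = t.2.1.1 ∧ t.2.1.2.1 = t.2.2.1} => t.1.2.2 :=
        continuous_snd.comp (continuous_snd.comp continuous_subtype_val)
      refine Continuous.prodMk ?_ h2
      exact continuous_compMor hcomp h1
        (continuous_compMor hcomp h2 h3 (fun t => t.2.2)) (fun t => t.2.1)
    have heq : {p : Mor C × Mor C | JLe p.1 p.2} = Set.range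
        (fun t : {t : Mor C × Mor C × Mor C //
          t.1.2.1 = t.2.1.1 ∧ t.2.1.2.1 = t.2.2.1} =>
        ((compMor t.1.1 (compMor t.1.2.1 t.1.2.2 t.2.2) t.2.1, t.1.2.1)
          : Mor C × Mor C)) := by
      ext ⟨m, n⟩
      simp only [Set.mem_setOf_eq, Set.mem_range]
      constructor
      · rintro ⟨W, Z, β, α, rfl⟩
        exact ⟨⟨(⟨W, n.1, β⟩, n, ⟨n.2.1, Z, α⟩), rfl, rfl⟩, by simp [compMor]⟩
      · rintro ⟨⟨⟨a, b, c⟩, hab, hbc⟩, hq⟩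
        simp only [Prod.mk.injEq] at hq
        obtain ⟨rfl, rfl⟩ := hq
        exact ⟨a.1, c.2.1, a.2.2 ≫ eqToHom hab, eqToHom hbc ≫ c.2.2,
          by simp [compMor]⟩
    rw [heq]
    exact (isCompact_range hF).isClosed
  refine ⟨⟨hR, hL, hJ⟩, fun m => ?_⟩
  have c1 : Continuous fun n : Mor C => ((n, m) : Mor C × Mor C) :=
    continuous_id.prodMk continuous_const
  have c2 : Continuous fun n : Mor C => ((m, n) : Mor C × Mor C) :=
    continuous_const.prodMk continuous_id
  exact ⟨(hR.preimage c1).inter (hR.preimage c2),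
    (hL.preimage c1).inter (hL.preimage c2),
    (hJ.preimage c1).inter (hJ.preimage c2)⟩
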